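/- Existence and uniqueness of bounded reference trajectory: let G be a causal convolution operator on bounded functions with induced gain ‖G‖ satisfying ‖G‖·L < 1, let f(t,·) be L-Lipschitz for each t with f(·,0) bounded, and let w be a bounded function. Then there exists a unique bounded function y on [0,∞) satisfying y = w + G(f(·, y(·))). -/

import Mathlib

set_option synthInstance.maxHeartbeats 1000000
set_option maxHeartbeats 1000000


/-- Existence and uniqueness of a bounded solution of the closed-loop reference
system `y = w + G (f(·, y(·)))`, where `G` is a linear operator on functions with
induced sup-norm gain at most `g`, `f(t,·)` is `L`-Lipschitz with `f(·,0)` bounded,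
`w` is bounded, and `g·L < 1`. -/
theorem reference_system_wellposed
    (G : (ℝ → ℝ) → (ℝ → ℝ)) (g L L₀ : ℝ)
    (hg : 0 ≤ g) (hL : 0 ≤ L) (hgL : g * L < 1)
    (hGadd : ∀ a b : ℝ → ℝ, G (fun t => a t + b t) = fun t => G a t + G b t)
    (hGsmul : ∀ (c : ℝ) (a : ℝ → ℝ), G (fun t => c * a t) = fun t => c * G a t)
    (hGgain : ∀ a : ℝ → ℝ, ∀ M : ℝ, (∀ t, |a t| ≤ M) → ∀ t, |G a t| ≤ g * M)
    (f : ℝ → ℝ → ℝ)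
    (hf : ∀ t v w : ℝ, |f t v - f t w| ≤ L * |v - w|)
    (hf0 : ∀ t : ℝ, |f t 0| ≤ L₀)
    (w : ℝ → ℝ) (Cw : ℝ) (hw : ∀ t, |w t| ≤ Cw) :
    ∃! y : ℝ → ℝ, (∃ M : ℝ, ∀ t, |y t| ≤ M) ∧
      (∀ t, y t = w t + G (fun s => f s (y s)) t) := by
  -- difference rule for G
  have hGsub : ∀ a b : ℝ → ℝ, ∀ t, G a t - G b t = G (fun s => a s - b s) t := by
    intro a b t
    have h := hGadd (fun s => a s - b s) b
    have h2 : (fun t => (fun s => a s - b s) t + b t) = a := by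
      funext s; ring
    rw [h2] at h
    have := congrFun h t
    linarith
  -- membership lemma
  have mem_of_bdd : ∀ (a : ℝ → ℝ) (M : ℝ), (∀ t, |a t| ≤ M) →
      Memℓp (a : ∀ _ : ℝ, ℝ) ⊤ := by
    intro a M hM
    apply memℓp_infty
    refine ⟨M, ?_⟩
    rintro x ⟨t, rfl⟩
    simpa [Real.norm_eq_abs] using hM t
  -- the map
  have hΦmem : ∀ y : lp (fun _ : ℝ => ℝ) ⊤, Memℓp ((fun t => w t + G (fun s => f s (y s)) t) : ∀ _ : ℝ, ℝ) ⊤ := by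
    intro y
    have hyb : ∀ t, |y t| ≤ ‖y‖ := by
      intro t
      simpa [Real.norm_eq_abs] using lp.norm_apply_le_norm ENNReal.top_ne_zero y t
    have hfb : ∀ t, |f t (y t)| ≤ L * ‖y‖ + L₀ := by
      intro t
      have h1 : |f t (y t) - f t 0| ≤ L * |y t| := by simpa using hf t (y t) 0
      have h2 := hf0 t
      have h3 : L * |y t| ≤ L * ‖y‖ := mul_le_mul_of_nonneg_left (hyb t) hL
      calc |f t (y t)| = |(f t (y t) - f t 0) + f t 0| := by ring_nf
        _ ≤ |f t (y t) - f t 0| + |f t 0| := abs_add_le _ _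
        _ ≤ L * ‖y‖ + L₀ := by linarith
    have hGb := hGgain _ _ hfb
    exact mem_of_bdd _ (Cw + g * (L * ‖y‖ + L₀)) (fun t => by
      have := abs_add_le (w t) (G (fun s => f s (y s)) t)
      have := hGb t
      have := hw t
      calc |w t + G (fun s => f s (y s)) t| ≤ |w t| + |G (fun s => f s (y s)) t| :=
        abs_add_le _ _
        _ ≤ Cw + g * (L * ‖y‖ + L₀) := by linarith)
  set Φ : lp (fun _ : ℝ => ℝ) ⊤ → lp (fun _ : ℝ => ℝ) ⊤ := fun y => ⟨(fun t => w t + G (fun s => f s (y s)) t), hΦmem y⟩ with hΦ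
  have hΦapp : ∀ (y : lp (fun _ : ℝ => ℝ) ⊤) (t : ℝ), (Φ y : ∀ _ : ℝ, ℝ) t = w t + G (fun s => f s (y s)) t := by
    intro y t; rfl
  -- Lipschitz estimate
  have hlip : ∀ y z : lp (fun _ : ℝ => ℝ) ⊤, dist (Φ y) (Φ z) ≤ g * L * dist y z := by
    intro y z
    have hdiffb : ∀ t, |y t - z t| ≤ ‖y - z‖ := by
      intro t
      have := lp.norm_apply_le_norm ENNReal.top_ne_zero (y - z) t
      simpa [Real.norm_eq_abs, lp.coeFn_sub, Pi.sub_apply] using this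
    have hfdiff : ∀ t, |f t (y t) - f t (z t)| ≤ L * ‖y - z‖ := by
      intro t
      exact (hf t (y t) (z t)).trans (mul_le_mul_of_nonneg_left (hdiffb t) hL)
    have hGd := hGgain (fun s => f s (y s) - f s (z s)) _ hfdiff
    have : ∀ t, ‖(Φ y - Φ z : lp (fun _ : ℝ => ℝ) ⊤) t‖ ≤ g * L * ‖y - z‖ := by
      intro t
      have h1 : (Φ y - Φ z : lp (fun _ : ℝ => ℝ) ⊤) t = G (fun s => f s (y s)) t - G (fun s => f s (z s)) t := by
        simp [lp.coeFn_sub, Pi.sub_apply, hΦapp]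
      rw [Real.norm_eq_abs, h1, hGsub]
      calc |G (fun s => f s (y s) - f s (z s)) t| ≤ g * (L * ‖y - z‖) := hGd t
        _ = g * L * ‖y - z‖ := by ring
    rw [dist_eq_norm, dist_eq_norm]
    exact lp.norm_le_of_forall_le (by positivity) this
  have hcontr : ContractingWith (Real.toNNReal (g * L)) Φ := by
    constructor
    · simpa [← NNReal.coe_lt_coe, Real.coe_toNNReal _ (mul_nonneg hg hL)] using hgL
    · apply LipschitzWith.of_dist_le_mul
      intro y z
      simpa [Real.coe_toNNReal _ (mul_nonneg hg hL)] using hlip y z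
  have hfix : Function.IsFixedPt Φ hcontr.fixedPoint := hcontr.fixedPoint_isFixedPt
  refine ⟨(hcontr.fixedPoint : ∀ _ : ℝ, ℝ), ⟨⟨‖hcontr.fixedPoint‖, fun t => by
      simpa [Real.norm_eq_abs] using lp.norm_apply_le_norm ENNReal.top_ne_zero hcontr.fixedPoint t⟩,
    fun t => by
      conv_lhs => rw [← hfix]⟩, ?_⟩
  rintro y ⟨⟨M, hM⟩, heq⟩
  set yhat : lp (fun _ : ℝ => ℝ) ⊤ := ⟨(y : ∀ _ : ℝ, ℝ), mem_of_bdd y M hM⟩ with hyhat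
  have hfixy : Function.IsFixedPt Φ yhat := by
    apply Subtype.ext
    funext t
    exact (heq t).symm
  have : yhat = hcontr.fixedPoint := hcontr.fixedPoint_unique hfixy
  calc y = (yhat : ∀ _ : ℝ, ℝ) := rfl
    _ = (hcontr.fixedPoint : ∀ _ : ℝ, ℝ) := by rw [this]
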